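/- Let R = R₁ × R₂, M = M₁ × M₂, S = S₁ × S₂, δ_× and φ_× as componentwise products of expansion/reduction functions. If N = N₁ × N₂ is a φ_×-δ_×-S-primary submodule of M associated to (s₁,s₂) ∈ S, then N₁ is a φ₁-δ₁-S₁-primary submodule of M₁ associated to s₁, or N₂ is a φ₂-δ₂-S₂-primary submodule of M₂ associated to s₂. -/

import Mathlib

open Submodule

variable {R₁ R₂ M₁ M₂ : Type*} [CommRing R₁] [CommRing R₂]
  [AddCommGroup M₁] [Module R₁ M₁] [AddCommGroup M₂] [Module R₂ M₂]

/-- `M₁` as a module over `R₁ × R₂` via the first projection. -/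
instance modFst : Module (R₁ × R₂) M₁ := Module.compHom M₁ (RingHom.fst R₁ R₂)

/-- `M₂` as a module over `R₁ × R₂` via the second projection. -/
instance modSnd : Module (R₁ × R₂) M₂ := Module.compHom M₂ (RingHom.snd R₁ R₂)

/-- The product submodule `N₁ × N₂` of the `R₁ × R₂`-module `M₁ × M₂`. -/
def prodSubmodule (N₁ : Submodule R₁ M₁) (N₂ : Submodule R₂ M₂) :
    Submodule (R₁ × R₂) (M₁ × M₂) where
  carrier := N₁ ×ˢ N₂
  add_mem' := fun hx hy => ⟨N₁.add_mem hx.1 hy.1, N₂.add_mem hx.2 hy.2⟩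
  zero_mem' := ⟨N₁.zero_mem, N₂.zero_mem⟩
  smul_mem' := fun r x hx => ⟨N₁.smul_mem r.1 hx.1, N₂.smul_mem r.2 hx.2⟩

/-- `N` is a `φ`-`δ`-`S`-primary submodule associated to `s ∈ S` (generic form). -/
def IsPhiDeltaSPrimary {R : Type*} [CommRing R] {M : Type*} [AddCommGroup M] [Module R M]
    (δ : Ideal R → Ideal R) (φ : Submodule R M → Submodule R M)
    (S : Set R) (s : R) (N : Submodule R M) : Prop :=
  N ≠ ⊤ ∧ ((δ (N.colon ⊤) : Set R) ∩ S = ∅) ∧ s ∈ S ∧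
    ∀ (a : R) (m : M), a • m ∈ N → a • m ∉ φ N → s • m ∈ N ∨ s * a ∈ δ (N.colon ⊤)

lemma mem_prodSubmodule (N₁ : Submodule R₁ M₁) (N₂ : Submodule R₂ M₂) (x : M₁ × M₂) :
    x ∈ prodSubmodule N₁ N₂ ↔ x.1 ∈ N₁ ∧ x.2 ∈ N₂ := Iff.rfl

lemma smul_fst' (r : R₁ × R₂) (x : M₁ × M₂) : (r • x).1 = r.1 • x.1 := rfl
lemma smul_snd' (r : R₁ × R₂) (x : M₁ × M₂) : (r • x).2 = r.2 • x.2 := rfl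

lemma colon_prodSubmodule (N₁ : Submodule R₁ M₁) (N₂ : Submodule R₂ M₂) :
    (prodSubmodule N₁ N₂).colon ⊤ = (N₁.colon ⊤).prod (N₂.colon ⊤) := by
  ext r
  simp only [Submodule.mem_colon, Submodule.mem_top, forall_true_left, Ideal.mem_prod,
    mem_prodSubmodule, smul_fst', smul_snd']
  constructor
  · intro h
    refine ⟨fun m _ => ?_, fun m _ => ?_⟩
    · simpa using (h ⟨m, 0⟩ (by simp)).1
    · simpa using (h ⟨0, m⟩ (by simp)).2
  · rintro ⟨h1, h2⟩ m _
    exact ⟨h1 m.1 (by simp), h2 m.2 (by simp)⟩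

theorem stmt19 (δ₁ : Ideal R₁ → Ideal R₁) (δ₂ : Ideal R₂ → Ideal R₂)
    (φ₁ : Submodule R₁ M₁ → Submodule R₁ M₁) (φ₂ : Submodule R₂ M₂ → Submodule R₂ M₂)
    (hδ₁1 : ∀ I, I ≤ δ₁ I) (hδ₁2 : ∀ I J, I ≤ J → δ₁ I ≤ δ₁ J)
    (hδ₂1 : ∀ I, I ≤ δ₂ I) (hδ₂2 : ∀ I J, I ≤ J → δ₂ I ≤ δ₂ J)
    (hφ₁1 : ∀ P, φ₁ P ≤ P) (hφ₁2 : ∀ P Q, P ≤ Q → φ₁ P ≤ φ₁ Q)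
    (hφ₂1 : ∀ P, φ₂ P ≤ P) (hφ₂2 : ∀ P Q, P ≤ Q → φ₂ P ≤ φ₂ Q)
    (S₁ : Set R₁) (hS₁1 : (1 : R₁) ∈ S₁) (hS₁mul : ∀ a ∈ S₁, ∀ b ∈ S₁, a * b ∈ S₁)
    (S₂ : Set R₂) (hS₂1 : (1 : R₂) ∈ S₂) (hS₂mul : ∀ a ∈ S₂, ∀ b ∈ S₂, a * b ∈ S₂)
    (δx : Ideal (R₁ × R₂) → Ideal (R₁ × R₂))
    (φx : Submodule (R₁ × R₂) (M₁ × M₂) → Submodule (R₁ × R₂) (M₁ × M₂))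
    (hδx : ∀ (I₁ : Ideal R₁) (I₂ : Ideal R₂),
      δx (I₁.prod I₂) = (δ₁ I₁).prod (δ₂ I₂))
    (hφx : ∀ (N₁ : Submodule R₁ M₁) (N₂ : Submodule R₂ M₂),
      φx (prodSubmodule N₁ N₂) = prodSubmodule (φ₁ N₁) (φ₂ N₂))
    (N₁ : Submodule R₁ M₁) (N₂ : Submodule R₂ M₂) (s₁ : R₁) (s₂ : R₂)
    (hprim : IsPhiDeltaSPrimary δx φx (S₁ ×ˢ S₂) (s₁, s₂) (prodSubmodule N₁ N₂)) :
    IsPhiDeltaSPrimary δ₁ φ₁ S₁ s₁ N₁ ∨ IsPhiDeltaSPrimary δ₂ φ₂ S₂ s₂ N₂ := by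
  obtain ⟨hne, hdisj, hs, hmain⟩ := hprim
  rw [colon_prodSubmodule, hδx] at hdisj hmain
  obtain ⟨hs1, hs2⟩ := hs
  -- the disjointness splits
  have hcase : ((δ₁ (N₁.colon ⊤) : Set R₁) ∩ S₁ = ∅) ∨ ((δ₂ (N₂.colon ⊤) : Set R₂) ∩ S₂ = ∅) := by
    by_contra h
    push_neg at h
    obtain ⟨h1, h2⟩ := h
    obtain ⟨a, ha1, ha2⟩ := h1
    obtain ⟨b, hb1, hb2⟩ := h2
    have : ((a, b) : R₁ × R₂) ∈ (((δ₁ (N₁.colon ⊤)).prod (δ₂ (N₂.colon ⊤)) : Ideal (R₁ × R₂)) : Set (R₁ × R₂)) ∩ (S₁ ×ˢ S₂) :=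
      ⟨⟨ha1, hb1⟩, ⟨ha2, hb2⟩⟩
    rw [hdisj] at this
    exact this
  rcases hcase with h1 | h2
  · left
    refine ⟨?_, h1, hs1, ?_⟩
    · rintro rfl
      have h1' : (1 : R₁) ∈ (δ₁ ((⊤ : Submodule R₁ M₁).colon ⊤) : Set R₁) ∩ S₁ := by
        refine ⟨hδ₁1 _ ?_, hS₁1⟩
        simp [Submodule.mem_colon]
      rw [h1] at h1'
      exact h1'
    · intro a m ham hnot
      have key := hmain (a, 1) (m, 0) ?_ ?_
      · rcases key with hk | hk
        · exact Or.inl hk.1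
        · exact Or.inr (by simpa using hk.1)
      · exact ⟨ham, by simpa using N₂.zero_mem⟩
      · rw [hφx]
        intro hmem
        exact hnot hmem.1
  · right
    refine ⟨?_, h2, hs2, ?_⟩
    · rintro rfl
      have h2' : (1 : R₂) ∈ (δ₂ ((⊤ : Submodule R₂ M₂).colon ⊤) : Set R₂) ∩ S₂ := by
        refine ⟨hδ₂1 _ ?_, hS₂1⟩
        simp [Submodule.mem_colon]
      rw [h2] at h2'
      exact h2'
    · intro a m ham hnot
      have key := hmain (1, a) (0, m) ?_ ?_
      · rcases key with hk | hk
        · exact Or.inl hk.2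
        · exact Or.inr (by simpa using hk.2)
      · exact ⟨by simpa using N₁.zero_mem, ham⟩
      · rw [hφx]
        intro hmem
        exact hnot hmem.2
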